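/- arXiv:1001.0492 — 2 statements merged into one kernel-verified Lean document; each statement's English description precedes it below -/
import Mathlib

section
/- Let A and B be real symmetric n×n matrices with decreasingly ordered eigenvalues l₁ ≥ ⋯ ≥ l_n. Then Σ_{i=1}^n |l_i(A) − l_i(B)|² ≤ ‖A − B‖_F². -/
/-!
Expanding both squares, the inequality reduces to `tr (A * B) ≤ ∑ i, a i * b i`. Diagonalising
`A = U diag(α) Uᵀ` and `B = V diag(β) Vᵀ` gives `tr (A * B) = αᵀ S β`, where `S` is the entrywise
square of the orthogonal matrix `Uᵀ V` and hence doubly stochastic. The linear functional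
`S ↦ αᵀ S β` is maximised over the Birkhoff polytope at a permutation matrix, and by the
rearrangement inequality the best permutation pairs the eigenvalues in the same order.
-/

namespace Matrix

variable {ι : Type*} [Fintype ι]

theorem sum_sq_eq_trace_mul_transpose {R : Type*} [CommSemiring R] (M : Matrix ι ι R) :
    ∑ i, ∑ j, M i j ^ 2 = (M * Mᵀ).trace := by
  simp [trace, mul_apply, sq]

variable [DecidableEq ι]

theorem dotProduct_mulVec_le_of_mem_doublyStochastic {a b : ι → ℝ} (hab : Monovary a b)
    {S : Matrix ι ι ℝ} (hS : S ∈ doublyStochastic ℝ ι) : a ⬝ᵥ (S *ᵥ b) ≤ a ⬝ᵥ b := by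
  have hconvex : Convex ℝ {S : Matrix ι ι ℝ | a ⬝ᵥ (S *ᵥ b) ≤ a ⬝ᵥ b} :=
    convex_halfSpace_le ⟨fun S T => by simp [add_mulVec, dotProduct_add],
      fun c S => by simp [smul_mulVec, dotProduct_smul]⟩ _
  rw [← SetLike.mem_coe, doublyStochastic_eq_convexHull_permMatrix] at hS
  refine convexHull_min ?_ hconvex hS
  rintro _ ⟨σ, rfl⟩
  simpa [permMatrix_mulVec, dotProduct] using hab.sum_mul_comp_perm_le_sum_mul (σ := σ)

theorem of_sq_mem_doublyStochastic_of_mem_unitaryGroup {W : Matrix ι ι ℝ}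
    (hW : W ∈ unitaryGroup ι ℝ) :
    of (fun i j => W i j ^ 2) ∈ doublyStochastic ℝ ι := by
  rw [mem_doublyStochastic_iff_sum]
  refine ⟨fun i j => sq_nonneg _, fun i => ?_, fun j => ?_⟩
  · simpa [mul_apply, one_apply, sq] using congr_fun₂ (mem_unitaryGroup_iff.mp hW) i i
  · simpa [mul_apply, one_apply, sq, mul_comm] using congr_fun₂ (mem_unitaryGroup_iff'.mp hW) j j

theorem trace_diagonal_mul_mul_diagonal_mul_transpose {R : Type*} [CommSemiring R]
    (a b : ι → R) (W : Matrix ι ι R) :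
    (diagonal a * W * diagonal b * Wᵀ).trace = a ⬝ᵥ (of (fun i j => W i j ^ 2) *ᵥ b) := by
  simp only [trace, diag, mul_apply, diagonal_apply, transpose_apply, of_apply, dotProduct, mulVec,
    ite_mul, mul_ite, zero_mul, mul_zero, Finset.sum_ite_eq, Finset.sum_ite_eq', Finset.mem_univ,
    if_true, Finset.mul_sum]
  refine Finset.sum_congr rfl fun i _ => Finset.sum_congr rfl fun j _ => ?_
  ring

theorem trace_mul_eq_of_eq_mul_diagonal_mul_transpose {R : Type*} [CommSemiring R]
    {A B U V : Matrix ι ι R} {a b : ι → R}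
    (hA : A = U * diagonal a * Uᵀ) (hB : B = V * diagonal b * Vᵀ) :
    (A * B).trace = a ⬝ᵥ (of (fun i j => (Uᵀ * V) i j ^ 2) *ᵥ b) := by
  rw [← trace_diagonal_mul_mul_diagonal_mul_transpose, hA, hB, transpose_mul, transpose_transpose]
  simp only [Matrix.mul_assoc]
  rw [trace_mul_comm U]
  simp only [Matrix.mul_assoc]

namespace IsHermitian

variable {A B : Matrix ι ι ℝ}

theorem eq_eigenvectorUnitary_mul_diagonal_mul_transpose (hA : A.IsHermitian) :
    A = (hA.eigenvectorUnitary : Matrix ι ι ℝ) * diagonal hA.eigenvalues *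
      (hA.eigenvectorUnitary : Matrix ι ι ℝ)ᵀ := by
  simpa [RCLike.ofReal_real_eq_id, star_eq_conjTranspose] using hA.spectral_theorem

theorem trace_mul_self_eq_sum_sq (hA : A.IsHermitian) :
    (A * A).trace = ∑ i, hA.eigenvalues i ^ 2 := by
  have hU : (hA.eigenvectorUnitary : Matrix ι ι ℝ)ᵀ * hA.eigenvectorUnitary = 1 :=
    mem_unitaryGroup_iff'.mp hA.eigenvectorUnitary.2
  have hA' := hA.eq_eigenvectorUnitary_mul_diagonal_mul_transpose
  rw [trace_mul_eq_of_eq_mul_diagonal_mul_transpose hA' hA', hU]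
  simp [dotProduct, mulVec, one_apply, sq]

theorem exists_mem_doublyStochastic_trace_mul_eq (hA : A.IsHermitian) (hB : B.IsHermitian) :
    ∃ S ∈ doublyStochastic ℝ ι, (A * B).trace = hA.eigenvalues ⬝ᵥ (S *ᵥ hB.eigenvalues) := by
  have hW : (hA.eigenvectorUnitary : Matrix ι ι ℝ)ᵀ * hB.eigenvectorUnitary ∈ unitaryGroup ι ℝ :=
    mul_mem (Unitary.star_mem hA.eigenvectorUnitary.2) hB.eigenvectorUnitary.2
  exact ⟨_, of_sq_mem_doublyStochastic_of_mem_unitaryGroup hW,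
    trace_mul_eq_of_eq_mul_diagonal_mul_transpose
      hA.eq_eigenvectorUnitary_mul_diagonal_mul_transpose
      hB.eq_eigenvectorUnitary_mul_diagonal_mul_transpose⟩

theorem trace_mul_le_dotProduct_of_monovary (hA : A.IsHermitian) (hB : B.IsHermitian)
    {σ τ : Equiv.Perm ι}
    (h : Monovary (hA.eigenvalues ∘ σ) (hB.eigenvalues ∘ τ)) :
    (A * B).trace ≤ (hA.eigenvalues ∘ σ) ⬝ᵥ (hB.eigenvalues ∘ τ) := by
  obtain ⟨S, hS, hAB⟩ := hA.exists_mem_doublyStochastic_trace_mul_eq hB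
  have hS' : S.submatrix σ τ ∈ doublyStochastic ℝ ι :=
    reindex_mem_doublyStochastic (e₁ := σ.symm) (e₂ := τ.symm) hS
  have hreindex : hA.eigenvalues ⬝ᵥ (S *ᵥ hB.eigenvalues) =
      (hA.eigenvalues ∘ σ) ⬝ᵥ (S.submatrix σ τ *ᵥ (hB.eigenvalues ∘ τ)) := by
    rw [submatrix_mulVec_equiv, ← dotProduct_comp_equiv_symm]
    simp [Function.comp_def]
  rw [hAB, hreindex]
  exact dotProduct_mulVec_le_of_mem_doublyStochastic h hS'

end IsHermitian
end Matrix

open Matrix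

/-- For real symmetric matrices `A`, `B` with decreasingly ordered eigenvalue sequences
`a` and `b`, we have `∑ i, |a i - b i|² ≤ ‖A - B‖_F²` (Lidskii). -/
theorem stmt6 {n : ℕ} (A B : Matrix (Fin n) (Fin n) ℝ)
    (hA : A.IsHermitian) (hB : B.IsHermitian)
    (a b : Fin n → ℝ)
    (σa : Equiv.Perm (Fin n)) (ha : a = hA.eigenvalues ∘ σa) (ha' : Antitone a)
    (σb : Equiv.Perm (Fin n)) (hb : b = hB.eigenvalues ∘ σb) (hb' : Antitone b) :
    ∑ i, |a i - b i| ^ 2 ≤ ∑ i, ∑ j, (A i j - B i j) ^ 2 := by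
  have hAA : ∑ i, a i ^ 2 = (A * A).trace := by
    rw [hA.trace_mul_self_eq_sum_sq, ha]
    exact Equiv.sum_comp σa (hA.eigenvalues · ^ 2)
  have hBB : ∑ i, b i ^ 2 = (B * B).trace := by
    rw [hB.trace_mul_self_eq_sum_sq, hb]
    exact Equiv.sum_comp σb (hB.eigenvalues · ^ 2)
  have hAB : (A * B).trace ≤ a ⬝ᵥ b := by
    subst ha hb
    exact hA.trace_mul_le_dotProduct_of_monovary hB (ha'.monovary hb')
  have hsymm : (A - B)ᵀ = A - B := (isHermitian_iff_isSymm.mp (hA.sub hB)).eq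
  calc ∑ i, |a i - b i| ^ 2 = ∑ i, a i ^ 2 + ∑ i, b i ^ 2 - 2 * (a ⬝ᵥ b) := by
        simp only [sq_abs, sub_sq, mul_assoc, dotProduct, Finset.sum_add_distrib,
          Finset.sum_sub_distrib, Finset.mul_sum]
        ring
    _ ≤ (A * A).trace + (B * B).trace - 2 * (A * B).trace := by linarith
    _ = ((A - B) * (A - B)ᵀ).trace := by
        rw [hsymm, sub_mul, mul_sub, mul_sub, trace_sub, trace_sub, trace_sub, trace_mul_comm B A]
        ring
    _ = ∑ i, ∑ j, (A i j - B i j) ^ 2 := (sum_sq_eq_trace_mul_transpose (A - B)).symm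
end

section
/- Let Σ be a p×p real positive semidefinite matrix. Then trace((Σ² ∘ Σ²)²) ≤ λ₁(Σ⁴) trace(Σ⁴), where ∘ denotes the Hadamard product and λ₁ the largest eigenvalue. -/
/-!
Write `B = Σ²`, so that `Σ⁴ = B²` and `(Σ⁴)ᵢᵢ = ∑ⱼ Bᵢⱼ²`. Then
`trace((B ⊙ B)²) = ∑ᵢ ∑ⱼ Bᵢⱼ⁴ ≤ ∑ᵢ (Σ⁴)ᵢᵢ² ≤ λ₁(Σ⁴) ∑ᵢ (Σ⁴)ᵢᵢ`,
since every diagonal entry of a Hermitian matrix is at most its largest eigenvalue.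
-/

open Matrix
open scoped Matrix MatrixOrder ComplexOrder

theorem Matrix.IsHermitian.re_diag_le_iSup_eigenvalues {𝕜 n : Type*} [RCLike 𝕜] [Fintype n]
    [DecidableEq n] {A : Matrix n n 𝕜} (hA : A.IsHermitian) (i : n) :
    RCLike.re (A i i) ≤ ⨆ j, hA.eigenvalues j := by
  have hle : A ≤ algebraMap ℝ (Matrix n n 𝕜) (⨆ j, hA.eigenvalues j) := by
    refine le_algebraMap_of_spectrum_le (fun x hx => ?_) hA.isSelfAdjoint
    obtain ⟨j, rfl⟩ := hA.spectrum_real_eq_range_eigenvalues ▸ hx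
    exact le_ciSup (Finite.bddAbove_range _) j
  have hre := (RCLike.nonneg_iff.mp ((Matrix.le_iff.mp hle).diag_nonneg (i := i))).1
  simpa [Matrix.algebraMap_eq_diagonal, sub_nonneg] using hre

section Symmetric

variable {n : Type*} [Fintype n] {B : Matrix n n ℝ}

theorem Matrix.IsSymm.mul_self_apply_self (hB : B.IsSymm) (i : n) :
    (B * B) i i = ∑ j, B i j ^ 2 := by
  simp only [mul_apply, hB.apply _ i, sq]

theorem Matrix.IsSymm.trace_sq_hadamard_self [DecidableEq n] (hB : B.IsSymm) :
    ((B ⊙ B) ^ 2).trace = ∑ i, ∑ j, (B i j ^ 2) ^ 2 := by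
  simp only [sq, trace, diag_apply, mul_apply, hadamard_apply, hB.apply]

theorem Matrix.IsSymm.trace_sq_hadamard_self_le [DecidableEq n] (hB : B.IsSymm) {μ : ℝ}
    (hμ : ∀ i, (B * B) i i ≤ μ) : ((B ⊙ B) ^ 2).trace ≤ μ * (B * B).trace := by
  rw [hB.trace_sq_hadamard_self, trace, Finset.mul_sum]
  refine Finset.sum_le_sum fun i _ => ?_
  have hrow : 0 ≤ (B * B) i i := hB.mul_self_apply_self i ▸ by positivity
  calc ∑ j, (B i j ^ 2) ^ 2 ≤ (∑ j, B i j ^ 2) ^ 2 :=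
        Finset.sum_sq_le_sq_sum_of_nonneg fun j _ => sq_nonneg _
    _ = (B * B) i i * (B * B) i i := by rw [hB.mul_self_apply_self, sq]
    _ ≤ μ * (B * B) i i := mul_le_mul_of_nonneg_right (hμ i) hrow

end Symmetric

/-- For a real positive semidefinite matrix `Σ`,
`trace((Σ² ⊙ Σ²)²) ≤ λ₁(Σ⁴) trace(Σ⁴)`, where `⊙` is the Hadamard product and `λ₁`
the largest eigenvalue. -/
theorem stmt12 {p : ℕ} (S : Matrix (Fin p) (Fin p) ℝ) (hS : S.PosSemidef) :
    (((S ^ 2) ⊙ (S ^ 2)) ^ 2).trace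
      ≤ (⨆ i, (hS.pow 4).1.eigenvalues i) * (S ^ 4).trace := by
  have hsq : S ^ 4 = S ^ 2 * S ^ 2 := by rw [← pow_add]
  have hdiag : ∀ i, (S ^ 2 * S ^ 2) i i ≤ ⨆ i, (hS.pow 4).1.eigenvalues i := fun i => by
    simpa only [hsq, RCLike.re_to_real] using (hS.pow 4).1.re_diag_le_iSup_eigenvalues i
  have hsymm : (S ^ 2).IsSymm := isHermitian_iff_isSymm.mp (hS.pow 2).1
  calc (((S ^ 2) ⊙ (S ^ 2)) ^ 2).trace
      ≤ (⨆ i, (hS.pow 4).1.eigenvalues i) * (S ^ 2 * S ^ 2).trace :=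
        hsymm.trace_sq_hadamard_self_le hdiag
    _ = (⨆ i, (hS.pow 4).1.eigenvalues i) * (S ^ 4).trace := by rw [← hsq]
end
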